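/- Let μ1 be the Deferred Acceptance match and μ2 the match produced from μ1 by the restricted Top Trading Cycles stage. Suppose a coalition A within-group blocks μ2 by within-group enforcing a match ν that A prefers to μ2. Then for every school s ∈ ν(A) there exists an injection T_s from ν⁻¹(s) ∩ A into μ1⁻¹(s) ∩ A such that: every student i ∈ ν⁻¹(s) ∩ A with i ∈ μ1⁻¹(s) is mapped to herself (T_s(i) = i), and every student i ∈ ν⁻¹(s) ∩ A with i ∉ μ1⁻¹(s) is mapped to a student in the same priority group [i]_s with higher within-group priority (T_s(i) ∈ [i]_s and T_s(i) ≻*_s i). -/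
import Mathlib


/-- A school choice problem.  Students `I` and schools `S` are finite types.
A match sends each student to `some s` (a school) or `none` (unmatched, i.e.
matched to herself).  Strict preferences/priorities are encoded by injective
numerical rank functions (higher value = more preferred / higher priority);
the weak between-group priority is encoded by an arbitrary rank function,
whose level sets are the priority groups. -/
structure SchoolChoice (I S : Type*) [Fintype I] [Fintype S] where
  /-- the capacity of each school -/
  q : S → ℕ
  /-- each school has at least one seat -/
  q_pos : ∀ s, 1 ≤ q s
  /-- student `i`'s strict preference over `S ∪ {i}` (`none` = being unmatched) -/
  pref : I → Option S → ℕ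
  pref_inj : ∀ i, Function.Injective (pref i)
  /-- the between-group priority of school `s` (a weak order on students) -/
  btw : S → I → ℕ
  /-- the within-group priority of school `s` (a strict total order on students) -/
  wthn : S → I → ℕ
  wthn_inj : ∀ s, Function.Injective (wthn s)
  /-- the within-group priority refines the between-group priority -/
  refines : ∀ s i j, btw s i < btw s j → wthn s i < wthn s j

namespace SchoolChoice

variable {I S : Type*} [Fintype I] [Fintype S] (P : SchoolChoice I S)

/-- `μ` is a match: no school is assigned more students than its capacity. -/
def IsMatch (μ : I → Option S) : Prop :=
  ∀ s : S, {i | μ i = some s}.ncard ≤ P.q s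

/-- `μ` is individually rational: every student weakly prefers her assignment
to being unmatched. -/
def IndRational (μ : I → Option S) : Prop :=
  ∀ i, P.pref i none ≤ P.pref i (μ i)

/-- Coalition `A` prefers `ν` to `μ`: all members weakly, some member strictly. -/
def Prefers (A : Set I) (ν μ : I → Option S) : Prop :=
  (∀ i ∈ A, P.pref i (μ i) ≤ P.pref i (ν i)) ∧ ∃ i ∈ A, P.pref i (μ i) < P.pref i (ν i)

/-- The priority group `[i]_s` of student `i` at school `s`. -/
def Group (s : S) (i : I) : Set I := {j | P.btw s j = P.btw s i}

/-- `A` can between-group enforce `ν` over `μ`: every member assigned a school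
by `ν` either displaces a student of strictly lower between-group priority or
takes an empty seat (a student can always enforce becoming unmatched). -/
def BtwEnforce (A : Set I) (ν μ : I → Option S) : Prop :=
  ∀ i ∈ A, ∀ s, ν i = some s →
    (∃ j, μ j = some s ∧ P.btw s j < P.btw s i) ∨ {j | μ j = some s}.ncard < P.q s

/-- `A` between-group blocks `μ`. -/
def BtwBlocks (A : Set I) (μ : I → Option S) : Prop :=
  ∃ ν, P.IsMatch ν ∧ P.BtwEnforce A ν μ ∧ P.Prefers A ν μ

/-- The responsive set extension `A ≿_s B` of the between-group priority:
`B` is no larger than `A`, and the students of `B` can be paired injectively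
with students of `A` of weakly higher between-group priority. -/
def SetGE (s : S) (A B : Set I) : Prop :=
  B.ncard ≤ A.ncard ∧
    ∃ g : I → I, Set.InjOn g B ∧ Set.MapsTo g B A ∧ ∀ b ∈ B, P.btw s b ≤ P.btw s (g b)

/-- Set indifference `A ∼_s B` under the responsive extension. -/
def SetSim (s : S) (A B : Set I) : Prop := P.SetGE s A B ∧ P.SetGE s B A

/-- The within-group upper contour set `U_s(i)`: the students in `i`'s priority
group at `s` with weakly higher within-group priority. -/
def UCS (s : S) (i : I) : Set I :=
  {j | P.btw s j = P.btw s i ∧ P.wthn s i ≤ P.wthn s j}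

/-- The pairs `(i, j)` where `i ∈ A` is sent to `s` by `ν` and `j` is a
within-group interrupter of `i` (i.e. `j ∈ U_s(i) \ A`).  Its cardinality is
the total number of within-group interrupters across all members of `A`
matched to `s` by `ν`. -/
def InterruptPairs (A : Set I) (ν : I → Option S) (s : S) : Set (I × I) :=
  {p | p.1 ∈ A ∧ ν p.1 = some s ∧ p.2 ∈ P.UCS s p.1 ∧ p.2 ∉ A}

/-- `A` can within-group enforce `ν` over `μ`: for every school in `ν(A)`,
(1) `ν⁻¹(s) ∼_s μ⁻¹(s)` and (2) the total number of within-group interrupters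
is at most `q s - |ν⁻¹(s)|`. -/
def WthnEnforce (A : Set I) (ν μ : I → Option S) : Prop :=
  ∀ s : S, (∃ i ∈ A, ν i = some s) →
    P.SetSim s {j | ν j = some s} {j | μ j = some s} ∧
    (P.InterruptPairs A ν s).ncard ≤ P.q s - {j | ν j = some s}.ncard

/-- `A` within-group blocks `μ`. -/
def WthnBlocks (A : Set I) (μ : I → Option S) : Prop :=
  ∃ ν, P.IsMatch ν ∧ P.WthnEnforce A ν μ ∧ P.Prefers A ν μ

/-- The unified core: no coalition between-group blocks nor within-group
blocks the match. -/
def UnifiedCore (μ : I → Option S) : Prop :=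
  (∀ A : Set I, ¬ P.BtwBlocks A μ) ∧ ∀ A : Set I, ¬ P.WthnBlocks A μ

/-- A match is fair (w.r.t. the within-group priorities, à la Gale–Shapley):
no student prefers a school that has an empty seat or admits a student of
strictly lower within-group priority. -/
def Fair (μ : I → Option S) : Prop :=
  ¬ ∃ (i : I) (s : S), P.pref i (μ i) < P.pref i (some s) ∧
    ((∃ j, μ j = some s ∧ P.wthn s j < P.wthn s i) ∨ {j | μ j = some s}.ncard < P.q s)

/-! ### The student-proposing Deferred Acceptance algorithm,
specified relationally.  The state is the map `R` sending each student to the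
set of schools that have rejected her so far. -/

/-- Given rejections `R`, student `i` currently proposes to `o`: `o` is not a
school that rejected `i`, and `o` is her most-preferred such option in
`S ∪ {i}`. -/
def ProposesTo (R : I → Set S) (i : I) (o : Option S) : Prop :=
  (∀ s, o = some s → s ∉ R i) ∧
  ∀ o' : Option S, (∀ s, o' = some s → s ∉ R i) → P.pref i o' ≤ P.pref i o

/-- Given rejections `R`, school `s` now rejects `i`: `i` proposes to `s` and
at least `q s` current proposers have strictly higher within-group priority. -/
def Rejects (R : I → Set S) (s : S) (i : I) : Prop :=
  P.ProposesTo R i (some s) ∧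
  P.q s ≤ {j | P.ProposesTo R j (some s) ∧ P.wthn s i < P.wthn s j}.ncard

/-- One round of Deferred Acceptance: some school is over-demanded, and every
over-demanded school rejects all but its `≻*`-top `q s` proposers. -/
def DAStep (R R' : I → Set S) : Prop :=
  (∃ s, P.q s < {i | P.ProposesTo R i (some s)}.ncard) ∧
  ∀ i, R' i = R i ∪ {s | P.Rejects R s i}

/-- Deferred Acceptance terminates: no school is over-demanded. -/
def DATerminal (R : I → Set S) : Prop :=
  ∀ s, {i | P.ProposesTo R i (some s)}.ncard ≤ P.q s

/-- `μ1` is the outcome of the student-proposing Deferred Acceptance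
algorithm: starting from no rejections, rounds are iterated until no school is
over-demanded, and every student is matched to the agent she last proposed to. -/
def IsDAOutcome (μ1 : I → Option S) : Prop :=
  ∃ (n : ℕ) (R : ℕ → I → Set S),
    (∀ i, R 0 i = ∅) ∧ (∀ k < n, P.DAStep (R k) (R (k + 1))) ∧
    P.DATerminal (R n) ∧ ∀ i, P.ProposesTo (R n) i (μ1 i)

/-! ### The restricted Top Trading Cycles stage, starting from a match `μ1`,
specified relationally.  The state is the pair of the set of active students
and the current assignment. -/

/-- Student `i` is initially active in the TTC stage: she is matched by `μ1`
to a school at which she lies in the lowest priority group among the students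
matched there. -/
def InitActive (μ1 : I → Option S) (i : I) : Prop :=
  ∃ s, μ1 i = some s ∧ ∀ j, μ1 j = some s → P.btw s i ≤ P.btw s j

/-- School `s` is admissible to student `i` (given active students `Act`):
some active student assigned to `s` by `μ1` is in the same priority group as
`i` at `s`.  (In particular `s` is then an active school.) -/
def Admissible (μ1 : I → Option S) (Act : Set I) (i : I) (s : S) : Prop :=
  ∃ j ∈ Act, μ1 j = some s ∧ P.btw s i = P.btw s j

/-- Active student `i` points to school `s`: `s` is her most-preferred
admissible active school. -/
def StuPoints (μ1 : I → Option S) (Act : Set I) (i : I) (s : S) : Prop :=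
  i ∈ Act ∧ P.Admissible μ1 Act i s ∧
  ∀ s', P.Admissible μ1 Act i s' → P.pref i (some s') ≤ P.pref i (some s)

/-- Active school `s` points to student `i`: `i` is the `≻*_s`-highest active
student in `μ1⁻¹(s)`. -/
def SchPoints (μ1 : I → Option S) (Act : Set I) (s : S) (i : I) : Prop :=
  i ∈ Act ∧ μ1 i = some s ∧ ∀ j ∈ Act, μ1 j = some s → P.wthn s j ≤ P.wthn s i

/-- A (pointing) cycle `i₁, s₁, …, iₙ, sₙ` of distinct active students and
active schools: each student `c k` points to school `d k`, and each school
`d k` points to the cyclically next student `c (k+1)`. -/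
def IsCycle (μ1 : I → Option S) (Act : Set I) {n : ℕ}
    (c : Fin (n + 1) → I) (d : Fin (n + 1) → S) : Prop :=
  Function.Injective c ∧ Function.Injective d ∧
  (∀ k, P.StuPoints μ1 Act (c k) (d k)) ∧
  ∀ k, P.SchPoints μ1 Act (d k) (c (k + 1))

/-- One round of the restricted TTC stage: a cycle forms, each student on the
cycle is assigned the school she points to and is deactivated; all other
assignments are unchanged. -/
def TTCStep (μ1 : I → Option S) (st st' : Set I × (I → Option S)) : Prop :=
  ∃ (n : ℕ) (c : Fin (n + 1) → I) (d : Fin (n + 1) → S),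
    P.IsCycle μ1 st.1 c d ∧
    st'.1 = st.1 \ Set.range c ∧
    (∀ k, st'.2 (c k) = some (d k)) ∧
    ∀ i, i ∉ Set.range c → st'.2 i = st.2 i

/-- `μ2` is the outcome of the restricted Top Trading Cycles stage starting
from `μ1`: beginning with the initially active students and assignment `μ1`,
rounds are iterated until no student is active. -/
def IsTTCOutcome (μ1 μ2 : I → Option S) : Prop :=
  ∃ (m : ℕ) (st : ℕ → Set I × (I → Option S)),
    st 0 = ({i | P.InitActive μ1 i}, μ1) ∧
    (∀ k < m, P.TTCStep μ1 (st k) (st (k + 1))) ∧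
    (st m).1 = ∅ ∧ μ2 = (st m).2

end SchoolChoice

/-! ### Auxiliary lemmas -/

section Helpers

lemma exists_inj_of_ncard_le' {α : Type*} [Fintype α] {W G : Set α} (h : W.ncard ≤ G.ncard) :
    ∃ f : α → α, Set.InjOn f W ∧ Set.MapsTo f W G := by
  classical
  have hW := W.toFinite
  have hG := G.toFinite
  haveI := hW.fintype
  haveI := hG.fintype
  have hc : Fintype.card W ≤ Fintype.card G := by
    rwa [Set.ncard_eq_toFinset_card', Set.ncard_eq_toFinset_card',
      Set.toFinset_card, Set.toFinset_card] at h
  obtain ⟨e⟩ := Function.Embedding.nonempty_of_card_le hc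
  refine ⟨fun i => if hi : i ∈ W then (e ⟨i, hi⟩ : α) else i, ?_, ?_⟩
  · intro x hx y hy hxy
    simp only [dif_pos hx, dif_pos hy] at hxy
    have h2 : e ⟨x, hx⟩ = e ⟨y, hy⟩ := Subtype.ext hxy
    exact congrArg Subtype.val (e.injective h2)
  · intro x hx
    simp only [dif_pos hx]
    exact (e ⟨x, hx⟩).2

lemma ncard_split' {α : Type*} [Fintype α] (V : Set α) (p : α → Prop) :
    {x ∈ V | p x}.ncard + {x ∈ V | ¬ p x}.ncard = V.ncard := by
  classical
  rw [← Set.ncard_union_eq ?_ (Set.toFinite _) (Set.toFinite _)]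
  · congr 1
    ext x; by_cases h : p x <;> simp [h]
  · rw [Set.disjoint_left]; rintro x ⟨-, hx⟩ ⟨-, hx'⟩; exact hx' hx

open Finset in
lemma exists_top' {α : Type*} [DecidableEq α] (f : α → ℕ) (q : ℕ)
    (T : Finset α) (hq : q ≤ T.card) :
    ∃ U ⊆ T, U.card = q ∧ ∀ j ∈ U, (T.filter fun j' => f j < f j').card < q := by
  induction T using Finset.strongInduction with
  | _ T ih =>
    rcases eq_or_lt_of_le hq with h | h
    · refine ⟨T, le_refl _, h.symm, fun j hj => ?_⟩
      have hsub : (T.filter fun j' => f j < f j') ⊆ T.erase j := by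
        intro x hx
        rw [mem_filter] at hx
        exact mem_erase.2 ⟨fun he => lt_irrefl _ (he ▸ hx.2), hx.1⟩
      calc (T.filter fun j' => f j < f j').card ≤ (T.erase j).card := card_le_card hsub
        _ < T.card := by
            rw [card_erase_of_mem hj]
            have : 0 < T.card := card_pos.2 ⟨j, hj⟩
            omega
        _ = q := h.symm
    · have hne : T.Nonempty := card_pos.1 (lt_of_le_of_lt (Nat.zero_le _) h)
      obtain ⟨j₀, hj₀T, hmin⟩ := T.exists_min_image f hne
      have hcard' : q ≤ (T.erase j₀).card := by
        rw [card_erase_of_mem hj₀T]; omega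
      obtain ⟨U, hUT', hcardU, hU⟩ := ih (T.erase j₀) (erase_ssubset hj₀T) hcard'
      refine ⟨U, hUT'.trans (erase_subset _ _), hcardU, fun j hj => ?_⟩
      have hjT' := hUT' hj
      have heq : (T.filter fun j' => f j < f j') = ((T.erase j₀).filter fun j' => f j < f j') := by
        rw [filter_erase, erase_eq_of_notMem]
        intro hmem
        rw [mem_filter] at hmem
        exact absurd (hmin j (mem_of_mem_erase hjT')) (not_le.2 hmem.2)
      rw [heq]; exact hU j hj

lemma exists_top_set' {α : Type*} [Fintype α] (f : α → ℕ) (q : ℕ)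
    (T : Set α) (hq : q ≤ T.ncard) :
    ∃ U : Set α, U ⊆ T ∧ U.ncard = q ∧ ∀ j ∈ U, {j' ∈ T | f j < f j'}.ncard < q := by
  classical
  rw [Set.ncard_eq_toFinset_card'] at hq
  obtain ⟨U, hUT, hcard, htop⟩ := exists_top' f q T.toFinset hq
  refine ⟨(U : Set α), fun x hx => by simpa using hUT (by simpa using hx), ?_, fun j hj => ?_⟩
  · rw [Set.ncard_coe_finset]; exact hcard
  · have hj' : j ∈ U := by simpa using hj
    have h2 := htop j hj'
    have heq : {j' ∈ T | f j < f j'} = ((T.toFinset.filter fun j' => f j < f j') : Finset α) := by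
      ext x; simp
    rw [heq, Set.ncard_coe_finset]
    exact h2

end Helpers

namespace SchoolChoice

variable {I S : Type*} [Fintype I] [Fintype S] (P : SchoolChoice I S)

lemma proposesTo_congr {R R' : I → Set S} {i : I} {o : Option S} (h : R i = R' i)
    (hp : P.ProposesTo R i o) : P.ProposesTo R' i o :=
  ⟨fun s hs => h ▸ hp.1 s hs, fun o' ho' => hp.2 o' (fun s hs => h.symm ▸ ho' s hs)⟩

lemma proposesTo_unique {R : I → Set S} {i : I} {o o' : Option S}
    (h : P.ProposesTo R i o) (h' : P.ProposesTo R i o') : o = o' :=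
  P.pref_inj i (le_antisymm (h'.2 o h.1) (h.2 o' h'.1))

/-- Key consequence of DA: if `i` strictly prefers `s` to her DA assignment then
`s` is full and every student matched to `s` has strictly higher within-group priority. -/
lemma da_key {μ1 : I → Option S} (h1 : P.IsDAOutcome μ1) {i : I} {s : S}
    (hlt : P.pref i (μ1 i) < P.pref i (some s)) :
    {j | μ1 j = some s}.ncard = P.q s ∧ ∀ j, μ1 j = some s → P.wthn s i < P.wthn s j := by
  obtain ⟨n, R, hR0, hsteps, hterm, hprop⟩ := h1
  have hsRn : s ∈ R n i := by
    by_contra hs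
    have h2 := (hprop i).2 (some s) (fun s' h' => by cases h'; exact hs)
    omega
  have hrej : ∃ k < n, P.Rejects (R k) s i := by
    have haux : ∀ k, k ≤ n → s ∈ R k i → ∃ k' < k, P.Rejects (R k') s i := by
      intro k
      induction k with
      | zero => intro _ h; rw [hR0] at h; exact absurd h (Set.notMem_empty s)
      | succ k ih =>
        intro hk h
        rw [(hsteps k (by omega)).2 i] at h
        rcases h with h | h
        · obtain ⟨k', hk', hr⟩ := ih (by omega) h
          exact ⟨k', by omega, hr⟩
        · exact ⟨k, by omega, h⟩
    exact haux n le_rfl hsRn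
  obtain ⟨k₀, hk₀n, hrej₀⟩ := hrej
  set T : ℕ → Set I := fun k => {j | P.ProposesTo (R k) j (some s) ∧ P.wthn s i < P.wthn s j}
    with hTdef
  have pres : ∀ k, k < n → P.q s ≤ (T k).ncard → P.q s ≤ (T (k+1)).ncard := by
    intro k hk hq
    obtain ⟨U, hUT, hUcard, htop⟩ := exists_top_set' (P.wthn s) (P.q s) (T k) hq
    have hUsub : U ⊆ T (k+1) := by
      intro j hj
      obtain ⟨hpj, hwj⟩ := hUT hj
      have hnr : ¬ P.Rejects (R k) s j := by
        intro hr
        have hsub : {j' | P.ProposesTo (R k) j' (some s) ∧ P.wthn s j < P.wthn s j'} ⊆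
            {j' ∈ T k | P.wthn s j < P.wthn s j'} := by
          rintro x ⟨hx1, hx2⟩
          exact ⟨⟨hx1, lt_trans hwj hx2⟩, hx2⟩
        have h3 := Set.ncard_le_ncard hsub (Set.toFinite _)
        have h4 := htop j hj
        have h5 := hr.2
        omega
      have hRj : R k j = R (k+1) j := by
        rw [(hsteps k hk).2 j]
        have hempty : {s' | P.Rejects (R k) s' j} = ∅ := by
          ext s'
          simp only [Set.mem_setOf_eq, Set.mem_empty_iff_false, iff_false]
          intro hr
          have h6 := P.proposesTo_unique hpj hr.1
          injection h6 with h7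
          subst h7
          exact hnr hr
        rw [hempty, Set.union_empty]
      exact ⟨P.proposesTo_congr hRj hpj, hwj⟩
    calc P.q s = U.ncard := hUcard.symm
      _ ≤ (T (k+1)).ncard := Set.ncard_le_ncard hUsub (Set.toFinite _)
  have hstart : P.q s ≤ (T k₀).ncard := hrej₀.2
  have hmono : ∀ k, k₀ ≤ k → k ≤ n → P.q s ≤ (T k).ncard := by
    intro k
    induction k with
    | zero => intro h1' _; rw [show (0:ℕ) = k₀ by omega]; exact hstart
    | succ k ih =>
      intro h1' h2'
      rcases Nat.lt_or_ge k₀ (k+1) with h | h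
      · exact pres k (by omega) (ih (by omega) (by omega))
      · rw [show k+1 = k₀ by omega]
        exact hstart
  have hTn : P.q s ≤ (T n).ncard := hmono n (by omega) le_rfl
  have hPn : {j | μ1 j = some s} = {j | P.ProposesTo (R n) j (some s)} := by
    ext j
    simp only [Set.mem_setOf_eq]
    exact ⟨fun h => h ▸ hprop j, fun h => P.proposesTo_unique (hprop j) h⟩
  have hsubTP : T n ⊆ {j | μ1 j = some s} := by
    rw [hPn]; intro x hx; exact hx.1
  have hle : {j | μ1 j = some s}.ncard ≤ P.q s := by rw [hPn]; exact hterm s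
  have hcard2 := Set.ncard_le_ncard hsubTP (Set.toFinite _)
  have heq : T n = {j | μ1 j = some s} :=
    Set.eq_of_subset_of_ncard_le hsubTP (by omega) (Set.toFinite _)
  refine ⟨by omega, fun j hj => ?_⟩
  have hjT : j ∈ T n := heq.symm ▸ (hj : j ∈ {j | μ1 j = some s})
  exact hjT.2

end SchoolChoice

namespace SchoolChoice

variable {I S : Type*} [Fintype I] [Fintype S] (P : SchoolChoice I S)

lemma ttc_step {μ1 : I → Option S} {Act Act' : Set I} {μ μ' : I → Option S}
    (hstep : P.TTCStep μ1 (Act, μ) (Act', μ'))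
    (hInit : Act ⊆ {i | P.InitActive μ1 i}) (hfix : ∀ i ∈ Act, μ i = μ1 i) :
    Act' ⊆ Act ∧ (∀ i ∈ Act', μ' i = μ i) ∧
    (∀ i, P.pref i (μ i) ≤ P.pref i (μ' i)) ∧
    (∀ s, ∃ φ : I → I, Set.BijOn φ {i | μ' i = some s} {i | μ i = some s} ∧
       ∀ i, μ' i = some s → P.btw s (φ i) = P.btw s i) := by
  classical
  obtain ⟨n, c, d, ⟨hcinj, hdinj, hstu, hsch⟩, hAct', hμ'c, hμ'off⟩ := hstep
  dsimp only at hAct' hμ'c hμ'off hstu hsch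
  have haddinj : Function.Injective (fun k : Fin (n+1) => k + 1) :=
    fun a b h => by simpa using add_left_injective 1 h
  have hcAct : ∀ k, c k ∈ Act := fun k => (hstu k).1
  have hc1Act : ∀ k, c (k+1) ∈ Act := fun k => (hsch k).1
  have hc1μ : ∀ k, μ1 (c (k+1)) = some (d k) := fun k => (hsch k).2.1
  have sameG : ∀ (s : S) (x y : I), x ∈ Act → y ∈ Act → μ1 x = some s → μ1 y = some s →
      P.btw s x = P.btw s y := by
    intro s x y hx hy hxs hys
    obtain ⟨s1, hs1, hall1⟩ := hInit hx
    rw [hxs] at hs1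
    injection hs1 with h; subst h
    obtain ⟨s2, hs2, hall2⟩ := hInit hy
    rw [hys] at hs2
    injection hs2 with h2; subst h2
    exact le_antisymm (hall1 y hys) (hall2 x hxs)
  have hbtwc : ∀ k, P.btw (d k) (c k) = P.btw (d k) (c (k+1)) := by
    intro k
    obtain ⟨j, hjAct, hjμ, hbeq⟩ := (hstu k).2.1
    rw [hbeq]
    exact sameG (d k) j (c (k+1)) hjAct (hc1Act k) hjμ (hc1μ k)
  set φ : I → I := fun i => if h : ∃ k, c k = i then c (Classical.choose h + 1) else i with hφdef
  have hφc : ∀ k, φ (c k) = c (k + 1) := by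
    intro k
    have h : ∃ k', c k' = c k := ⟨k, rfl⟩
    simp only [hφdef, dif_pos h]
    congr 2
    exact hcinj (Classical.choose_spec h)
  have hφoff : ∀ i, (¬ ∃ k, c k = i) → φ i = i := fun i h => dif_neg h
  have hrange : ∀ i : I, i ∈ Set.range c ↔ ∃ k, c k = i := fun i => Iff.rfl
  refine ⟨?_, ?_, ?_, ?_⟩
  · intro i hi
    rw [hAct'] at hi
    exact hi.1
  · intro i hi
    rw [hAct'] at hi
    exact hμ'off i hi.2
  · intro i
    by_cases h : ∃ k, c k = i
    · obtain ⟨k, rfl⟩ := h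
      have hμc : μ (c k) = μ1 (c k) := hfix _ (hcAct k)
      obtain ⟨s', hs', -⟩ := hInit (hcAct k)
      have hadm : P.Admissible μ1 Act (c k) s' := ⟨c k, hcAct k, hs', rfl⟩
      have h9 := (hstu k).2.2 s' hadm
      rw [hμc, hs', hμ'c k]
      exact h9
    · rw [hμ'off i (fun hc => h ((hrange i).1 hc))]
  · intro s
    refine ⟨φ, ⟨?_, ?_, ?_⟩, ?_⟩
    · intro x hx
      by_cases h : ∃ k, c k = x
      · obtain ⟨k, rfl⟩ := h
        have hd : d k = s := by
          have h10 := hμ'c k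
          rw [hx] at h10
          injection h10 with h11
          exact h11.symm
        rw [hφc k]
        show μ (c (k+1)) = some s
        rw [hfix _ (hc1Act k), hc1μ k, hd]
      · rw [hφoff x h]
        show μ x = some s
        rw [← hμ'off x (fun hc => h ((hrange x).1 hc))]
        exact hx
    · intro x hx y hy hxy
      by_cases h1 : ∃ k, c k = x <;> by_cases h2 : ∃ l, c l = y
      · obtain ⟨k, rfl⟩ := h1
        obtain ⟨l, rfl⟩ := h2
        rw [hφc, hφc] at hxy
        exact congrArg c (haddinj (hcinj hxy))
      · obtain ⟨k, rfl⟩ := h1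
        rw [hφc, hφoff y h2] at hxy
        exact absurd ⟨k+1, hxy⟩ h2
      · obtain ⟨l, rfl⟩ := h2
        rw [hφc, hφoff x h1] at hxy
        exact absurd ⟨l+1, hxy.symm⟩ h1
      · rw [hφoff x h1, hφoff y h2] at hxy
        exact hxy
    · intro j hj
      by_cases h : ∃ l, c l = j
      · obtain ⟨l, rfl⟩ := h
        have hμ1l : μ1 (c l) = some s := by
          rw [← hfix _ (hcAct l)]
          exact hj
        have hdl : d (l-1) = s := by
          have h12 := hc1μ (l-1)
          rw [sub_add_cancel, hμ1l] at h12
          injection h12 with h13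
          exact h13.symm
        refine ⟨c (l-1), ?_, ?_⟩
        · show μ' (c (l-1)) = some s
          rw [hμ'c (l-1), hdl]
        · rw [hφc (l-1), sub_add_cancel]
      · refine ⟨j, ?_, hφoff j h⟩
        show μ' j = some s
        rw [hμ'off j (fun hc => h ((hrange j).1 hc))]
        exact hj
    · intro x hx
      by_cases h : ∃ k, c k = x
      · obtain ⟨k, rfl⟩ := h
        have hd : d k = s := by
          have h10 := hμ'c k
          rw [hx] at h10
          injection h10 with h11
          exact h11.symm
        rw [hφc k, ← hd]
        exact (hbtwc k).symm
      · rw [hφoff x h]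

lemma ttc_facts {μ1 μ2 : I → Option S} (h2 : P.IsTTCOutcome μ1 μ2) :
    (∀ i, P.pref i (μ1 i) ≤ P.pref i (μ2 i)) ∧
    (∀ s, {i | μ2 i = some s}.ncard = {i | μ1 i = some s}.ncard) ∧
    (∀ s b, {i | μ2 i = some s ∧ P.btw s i ≤ b}.ncard
      = {i | μ1 i = some s ∧ P.btw s i ≤ b}.ncard) := by
  obtain ⟨m, st, hst0, hsteps, hstm, hμ2⟩ := h2
  have main : ∀ k, k ≤ m → ((st k).1 ⊆ {i | P.InitActive μ1 i}) ∧
      (∀ i ∈ (st k).1, (st k).2 i = μ1 i) ∧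
      (∀ i, P.pref i (μ1 i) ≤ P.pref i ((st k).2 i)) ∧
      (∀ s, {i | (st k).2 i = some s}.ncard = {i | μ1 i = some s}.ncard) ∧
      (∀ s b, {i | (st k).2 i = some s ∧ P.btw s i ≤ b}.ncard
        = {i | μ1 i = some s ∧ P.btw s i ≤ b}.ncard) := by
    intro k
    induction k with
    | zero =>
      intro _
      rw [hst0]
      exact ⟨le_refl _, fun i _ => rfl, fun i => le_refl _, fun s => rfl, fun s b => rfl⟩
    | succ k ih =>
      intro hk
      obtain ⟨hI, hF, hP, hC, hL⟩ := ih (by omega)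
      have hstep : P.TTCStep μ1 ((st k).1, (st k).2) ((st (k+1)).1, (st (k+1)).2) :=
        hsteps k (by omega)
      obtain ⟨hA', hF', hP', hBij⟩ := P.ttc_step hstep hI hF
      refine ⟨fun i hi => hI (hA' hi), ?_, ?_, ?_, ?_⟩
      · intro i hi
        rw [hF' i hi]
        exact hF i (hA' hi)
      · intro i
        exact le_trans (hP i) (hP' i)
      · intro s
        obtain ⟨φ, hbij, hbtw⟩ := hBij s
        rw [← hC s, ← hbij.image_eq, Set.ncard_image_of_injOn hbij.injOn]
      · intro s b
        obtain ⟨φ, hbij, hbtw⟩ := hBij s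
        have hbij2 : Set.BijOn φ {i | (st (k+1)).2 i = some s ∧ P.btw s i ≤ b}
            {i | (st k).2 i = some s ∧ P.btw s i ≤ b} := by
          refine ⟨?_, fun x hx y hy h => hbij.injOn hx.1 hy.1 h, ?_⟩
          · rintro x ⟨hx1, hx2⟩
            exact ⟨hbij.mapsTo hx1, by rw [hbtw x hx1]; exact hx2⟩
          · rintro j ⟨hj1, hj2⟩
            obtain ⟨x, hx, rfl⟩ := hbij.surjOn hj1
            rw [hbtw x hx] at hj2
            exact ⟨x, ⟨hx, hj2⟩, rfl⟩
        rw [← hL s b, ← hbij2.image_eq, Set.ncard_image_of_injOn hbij2.injOn]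
  obtain ⟨-, -, hP, hC, hL⟩ := main m le_rfl
  rw [hμ2]
  exact ⟨hP, hC, hL⟩

end SchoolChoice

namespace SchoolChoice

variable {I S : Type*} [Fintype I] [Fintype S] (P : SchoolChoice I S)

lemma setSim_facts {s : S} {V M : Set I} (h : P.SetSim s V M) :
    V.ncard = M.ncard ∧
    ∀ b, {i ∈ V | P.btw s i ≤ b}.ncard ≤ {i ∈ M | P.btw s i ≤ b}.ncard := by
  obtain ⟨⟨hMV, g, hginj, hgmap, hgbtw⟩, hVM, g', hg'inj, hg'map, hg'btw⟩ := h
  refine ⟨le_antisymm hVM hMV, fun b => ?_⟩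
  have hgt : {i ∈ M | ¬ P.btw s i ≤ b}.ncard ≤ {i ∈ V | ¬ P.btw s i ≤ b}.ncard := by
    apply Set.ncard_le_ncard_of_injOn g ?_ ?_ (Set.toFinite _)
    · rintro x ⟨hxM, hxb⟩
      exact ⟨hgmap hxM, fun hle => hxb (le_trans (hgbtw x hxM) hle)⟩
    · exact hginj.mono (fun x hx => hx.1)
  have h1 := ncard_split' V (fun i => P.btw s i ≤ b)
  have h2 := ncard_split' M (fun i => P.btw s i ≤ b)
  have h3 : V.ncard = M.ncard := le_antisymm hVM hMV
  omega

end SchoolChoice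


open SchoolChoice in
/-- if a coalition `A` within-group blocks `μ2` with `ν`, then
for every school `s ∈ ν(A)` there is an injection `T` from `ν⁻¹(s) ∩ A` into
`μ1⁻¹(s) ∩ A` fixing the students already in `μ1⁻¹(s)` and sending every other
student to a same-group student of strictly higher within-group priority. -/
theorem within_block_owner_injection {I S : Type*} [Fintype I] [Fintype S]
    (P : SchoolChoice I S) (μ1 μ2 : I → Option S)
    (h1 : P.IsDAOutcome μ1) (h2 : P.IsTTCOutcome μ1 μ2)
    (A : Set I) (ν : I → Option S) (hν : P.IsMatch ν)
    (henf : P.WthnEnforce A ν μ2) (hpref : P.Prefers A ν μ2) :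
    ∀ s : S, (∃ i ∈ A, ν i = some s) →
      ∃ T : I → I,
        Set.InjOn T ({i | ν i = some s} ∩ A) ∧
        Set.MapsTo T ({i | ν i = some s} ∩ A) ({i | μ1 i = some s} ∩ A) ∧
        (∀ i ∈ ({i | ν i = some s} ∩ A), μ1 i = some s → T i = i) ∧
        ∀ i ∈ ({i | ν i = some s} ∩ A), μ1 i ≠ some s →
          P.btw s (T i) = P.btw s i ∧ P.wthn s i < P.wthn s (T i) := by
  classical
  intro s hs
  obtain ⟨hsim, hcnt⟩ := henf s hs
  obtain ⟨httcpref, httccard, httclevel⟩ := P.ttc_facts h2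
  obtain ⟨hVM2card, hVM2level⟩ := P.setSim_facts hsim
  by_cases hWall : ∀ i ∈ ({i | ν i = some s} ∩ A), μ1 i = some s
  · refine ⟨id, fun x _ y _ h => h, ?_, fun i _ _ => rfl, ?_⟩
    · intro i hi
      exact ⟨hWall i hi, hi.2⟩
    · intro i hi hne
      exact absurd (hWall i hi) hne
  · push_neg at hWall
    obtain ⟨i₀, hi₀mem, hi₀ne⟩ := hWall
    have hstrict : ∀ i ∈ ({i | ν i = some s} ∩ A), μ1 i ≠ some s →
        P.pref i (μ1 i) < P.pref i (some s) := by
      intro i hi hne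
      have ha : P.pref i (μ2 i) ≤ P.pref i (ν i) := hpref.1 i hi.2
      have hb : ν i = some s := hi.1
      rw [hb] at ha
      have hc := httcpref i
      have hd : P.pref i (μ1 i) ≤ P.pref i (some s) := le_trans hc ha
      exact lt_of_le_of_ne hd (fun he => hne (P.pref_inj i he))
    have hkey := P.da_key h1 (hstrict i₀ hi₀mem hi₀ne)
    have hVcard : {i | ν i = some s}.ncard = P.q s := by
      rw [hVM2card, httccard s]
      exact hkey.1
    have hint : P.InterruptPairs A ν s = ∅ := by
      rw [hVcard] at hcnt
      have hfin := (P.InterruptPairs A ν s).toFinite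
      rw [← Set.ncard_eq_zero hfin]
      omega
    have hlev : ∀ b, {x ∈ {i | ν i = some s} | P.btw s x ≤ b}.ncard ≤
        {x ∈ {i | μ1 i = some s} | P.btw s x ≤ b}.ncard :=
      fun b => le_trans (hVM2level b) (le_of_eq (httclevel s b))
    have hWgroup : ∀ i ∈ ({i | ν i = some s} ∩ A), μ1 i ≠ some s →
        P.btw s i = P.btw s i₀ := by
      intro i hi hne
      have hFlb_i : ∀ j, μ1 j = some s → P.btw s i ≤ P.btw s j := by
        intro j hj
        by_contra hlt'
        push_neg at hlt'
        have hw := (P.da_key h1 (hstrict i hi hne)).2 j hj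
        have := P.refines s j i hlt'
        omega
      have hFlb_i₀ : ∀ j, μ1 j = some s → P.btw s i₀ ≤ P.btw s j := by
        intro j hj
        by_contra hlt'
        push_neg at hlt'
        have hw := hkey.2 j hj
        have := P.refines s j i₀ hlt'
        omega
      have hget : ∀ x : I, (x ∈ {i | ν i = some s}) → ∀ b, P.btw s x ≤ b →
          ∃ f, μ1 f = some s ∧ P.btw s f ≤ b := by
        intro x hx b hxb
        have hpos : 0 < {x ∈ {i | ν i = some s} | P.btw s x ≤ b}.ncard :=
          (Set.ncard_pos (Set.toFinite _)).2 ⟨x, hx, hxb⟩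
        have h5 := hlev b
        have hpos2 : 0 < {x ∈ {i | μ1 i = some s} | P.btw s x ≤ b}.ncard := by omega
        obtain ⟨f, hf1, hf2⟩ := (Set.ncard_pos (Set.toFinite _)).1 hpos2
        exact ⟨f, hf1, hf2⟩
      obtain ⟨f1, hf11, hf12⟩ := hget i hi.1 (P.btw s i) le_rfl
      obtain ⟨f2, hf21, hf22⟩ := hget i₀ hi₀mem.1 (P.btw s i₀) le_rfl
      have := hFlb_i₀ f1 hf11
      have := hFlb_i f2 hf21
      omega
    have hFlb : ∀ j, μ1 j = some s → P.btw s i₀ ≤ P.btw s j := by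
      intro j hj
      by_contra hlt'
      push_neg at hlt'
      have hw := hkey.2 j hj
      have := P.refines s j i₀ hlt'
      omega
    set b₀ := P.btw s i₀ with hb₀
    set G := {j | μ1 j = some s ∧ P.btw s j = b₀} with hG
    have hGA : ∀ j ∈ G, j ∈ A := by
      intro j hj
      by_contra hjA
      have hmem : (i₀, j) ∈ P.InterruptPairs A ν s :=
        ⟨hi₀mem.2, hi₀mem.1, ⟨hj.2, le_of_lt (hkey.2 j hj.1)⟩, hjA⟩
      rw [hint] at hmem
      exact hmem
    have hFeq : {x ∈ {i | μ1 i = some s} | P.btw s x ≤ b₀} = G := by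
      ext x
      constructor
      · rintro ⟨hx1, hx2⟩
        exact ⟨hx1, le_antisymm hx2 (hFlb x hx1)⟩
      · rintro ⟨hx1, hx2⟩
        exact ⟨hx1, le_of_eq hx2⟩
    set W := {i | (i ∈ {i | ν i = some s} ∩ A) ∧ μ1 i ≠ some s} with hWdef
    set FixG := G ∩ ({i | ν i = some s} ∩ A) with hFixG
    set D := G \ ({i | ν i = some s} ∩ A) with hD
    have hWsub : W ∪ FixG ⊆ {x ∈ {i | ν i = some s} | P.btw s x ≤ b₀} := by
      rintro x (hx | hx)
      · exact ⟨hx.1.1, le_of_eq (hWgroup x hx.1 hx.2)⟩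
      · exact ⟨hx.2.1, le_of_eq hx.1.2⟩
    have hdisj : Disjoint W FixG := by
      rw [Set.disjoint_left]
      rintro x hx hx'
      exact hx.2 hx'.1.1
    have hGsplit : FixG.ncard + D.ncard = G.ncard := by
      rw [← Set.ncard_union_eq ?_ (Set.toFinite _) (Set.toFinite _)]
      · congr 1
        rw [Set.inter_union_diff]
      · rw [Set.disjoint_left]
        rintro x hx hx'
        exact hx'.2 hx.2
    have hcount : W.ncard + FixG.ncard ≤ G.ncard := by
      have h6 : (W ∪ FixG).ncard = W.ncard + FixG.ncard :=
        Set.ncard_union_eq hdisj (Set.toFinite _) (Set.toFinite _)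
      have h7 := Set.ncard_le_ncard hWsub (Set.toFinite _)
      have h8 := hlev b₀
      rw [hFeq] at h8
      omega
    have hWD : W.ncard ≤ D.ncard := by omega
    obtain ⟨f, hfinj, hfmap⟩ := exists_inj_of_ncard_le' hWD
    refine ⟨fun i => if μ1 i = some s then i else f i, ?_, ?_, ?_, ?_⟩
    · intro x hx y hy hxy
      dsimp only at hxy
      by_cases h1' : μ1 x = some s <;> by_cases h2' : μ1 y = some s
      · rwa [if_pos h1', if_pos h2'] at hxy
      · rw [if_pos h1', if_neg h2'] at hxy
        have hfy : f y ∈ D := hfmap ⟨hy, h2'⟩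
        exact absurd (hxy ▸ hx) hfy.2
      · rw [if_neg h1', if_pos h2'] at hxy
        have hfx : f x ∈ D := hfmap ⟨hx, h1'⟩
        exact absurd (hxy.symm ▸ hy) hfx.2
      · rw [if_neg h1', if_neg h2'] at hxy
        exact hfinj ⟨hx, h1'⟩ ⟨hy, h2'⟩ hxy
    · intro x hx
      dsimp only [Set.mem_setOf_eq]
      by_cases h1' : μ1 x = some s
      · rw [if_pos h1']
        exact ⟨h1', hx.2⟩
      · rw [if_neg h1']
        have hfx : f x ∈ D := hfmap ⟨hx, h1'⟩
        exact ⟨hfx.1.1, hGA _ hfx.1⟩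
    · intro i _ hi1
      dsimp only
      rw [if_pos hi1]
    · intro i hi hne
      dsimp only
      rw [if_neg hne]
      have hfi : f i ∈ D := hfmap ⟨hi, hne⟩
      constructor
      · rw [hfi.1.2, hWgroup i hi hne]
      · exact (P.da_key h1 (hstrict i hi hne)).2 (f i) hfi.1.1
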